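/- Let S be a finite group, T a normal subgroup of S, and (P,φ) an (S,S)-pair with φ(P ∩ T) ≤ T. Write S̄ = S/T and P̄ = PT/T ≤ S̄, and let φ̄: P̄ → S̄ be the homomorphism induced by φ (i.e., φ̄(pT) = φ(p)T for p ∈ P, well-defined since φ(P∩T) ≤ T). Then the double quotient T\(S ×_{(P,φ)} S)/T, equipped with the induced left and right S̄-actions (s̄·[x]·t̄ = [s·x·t]), is isomorphic as an (S̄,S̄)-biset to S̄ ×_{(P̄,φ̄)} S̄. -/

import Mathlib

/-! ## Bisets -/

/-- A `(G,H)`-biset structure on a type `X`: a left `H`-action and a right `G`-action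
that commute with each other. -/
structure BisetAction (G H : Type*) [Group G] [Group H] (X : Type*) where
  /-- the left `H`-action -/
  smul : H → X → X
  /-- the right `G`-action -/
  rmul : X → G → X
  one_smul : ∀ x, smul 1 x = x
  mul_smul : ∀ h₁ h₂ x, smul (h₁ * h₂) x = smul h₁ (smul h₂ x)
  rmul_one : ∀ x, rmul x 1 = x
  rmul_mul : ∀ x g₁ g₂, rmul x (g₁ * g₂) = rmul (rmul x g₁) g₂
  smul_rmul : ∀ h x g, rmul (smul h x) g = smul h (rmul x g)

namespace BisetAction

variable {G H K : Type*} [Group G] [Group H] [Group K] {X Y Z : Type*}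

lemma smul_smul (A : BisetAction G H X) (h₁ h₂ : H) (x : X) :
    A.smul h₁ (A.smul h₂ x) = A.smul (h₁ * h₂) x := (A.mul_smul h₁ h₂ x).symm

lemma rmul_rmul (A : BisetAction G H X) (x : X) (g₁ g₂ : G) :
    A.rmul (A.rmul x g₁) g₂ = A.rmul x (g₁ * g₂) := (A.rmul_mul x g₁ g₂).symm

/-- The biset is left-free. -/
def LeftFree (A : BisetAction G H X) : Prop := ∀ (h : H) (x : X), A.smul h x = x → h = 1

/-- The biset is right-free. -/
def RightFree (A : BisetAction G H X) : Prop := ∀ (g : G) (x : X), A.rmul x g = x → g = 1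

/-- The biset is bifree: both actions are free. -/
def Bifree (A : BisetAction G H X) : Prop := A.LeftFree ∧ A.RightFree

/-- The fixed-point set `X^{(P,φ)} = {x | x·u = φ(u)·x for all u ∈ P}`. -/
def Fix (A : BisetAction G H X) (P : Subgroup G) (φ : P →* H) : Set X :=
  {x | ∀ u : P, A.rmul x u = A.smul (φ u) x}

/-- The opposite biset: same underlying set, with the two actions reversed
(`g·x·h` in `op A` is `h⁻¹·x·g⁻¹` in `A`). -/
def op (A : BisetAction G H X) : BisetAction H G X where
  smul g x := A.rmul x g⁻¹
  rmul x h := A.smul h⁻¹ x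
  one_smul x := by simpa using A.rmul_one x
  mul_smul g₁ g₂ x := by rw [mul_inv_rev, A.rmul_mul]
  rmul_one x := by simpa using A.one_smul x
  rmul_mul x h₁ h₂ := by rw [mul_inv_rev, A.mul_smul]
  smul_rmul g x h := (A.smul_rmul h⁻¹ x g⁻¹).symm

/-- The setoid of left `H`-orbits. -/
def leftOrbitSetoid (A : BisetAction G H X) : Setoid X where
  r x y := ∃ h : H, y = A.smul h x
  iseqv := by
    refine ⟨fun x => ⟨1, (A.one_smul x).symm⟩, ?_, ?_⟩
    · rintro x y ⟨h, rfl⟩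
      exact ⟨h⁻¹, by rw [A.smul_smul, inv_mul_cancel, A.one_smul]⟩
    · rintro x y z ⟨h₁, rfl⟩ ⟨h₂, rfl⟩
      exact ⟨h₂ * h₁, A.smul_smul h₂ h₁ x⟩

/-- The set of left `H`-orbits of the biset. -/
def leftOrbits (A : BisetAction G H X) : Type _ := Quotient (A.leftOrbitSetoid)

/-- Restricting the right action along a homomorphism `φ : P →* G`. -/
def restrictRight (A : BisetAction G H X) {P : Type*} [Group P] (φ : P →* G) :
    BisetAction P H X where
  smul := A.smul
  rmul x u := A.rmul x (φ u)
  one_smul := A.one_smul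
  mul_smul := A.mul_smul
  rmul_one x := by rw [map_one, A.rmul_one]
  rmul_mul x u₁ u₂ := by rw [map_mul, A.rmul_mul]
  smul_rmul h x u := A.smul_rmul h x (φ u)

/-- Restricting the left action along a homomorphism `φ : P →* H`. -/
def restrictLeft (A : BisetAction G H X) {P : Type*} [Group P] (φ : P →* H) :
    BisetAction G P X where
  smul u x := A.smul (φ u) x
  rmul := A.rmul
  one_smul x := by rw [map_one, A.one_smul]
  mul_smul u₁ u₂ x := by rw [map_mul, A.mul_smul]
  rmul_one := A.rmul_one
  rmul_mul := A.rmul_mul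
  smul_rmul u x g := A.smul_rmul (φ u) x g

end BisetAction

/-- An isomorphism of `(G,H)`-bisets: an equivalence of underlying sets commuting with
both actions. -/
structure BisetIso {G H : Type*} [Group G] [Group H] {X Y : Type*}
    (A : BisetAction G H X) (B : BisetAction G H Y) extends X ≃ Y where
  map_smul : ∀ (h : H) (x : X), toEquiv (A.smul h x) = B.smul h (toEquiv x)
  map_rmul : ∀ (x : X) (g : G), toEquiv (A.rmul x g) = B.rmul (toEquiv x) g
/-! ### The standard bisets `[L,ψ] = H ×_{(L,ψ)} G` -/

section Std

variable {G H : Type*} [Group G] [Group H]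

/-- The setoid on `H × G` generated by `(x·ψ(l), y) ∼ (x, l·y)` for `l ∈ L`. -/
def pairSetoid (L : Subgroup G) (ψ : L →* H) : Setoid (H × G) where
  r a b := ∃ l : L, b.1 = a.1 * ψ l ∧ b.2 = (l : G)⁻¹ * a.2
  iseqv := by
    refine ⟨fun a => ⟨1, by simp⟩, ?_, ?_⟩
    · rintro ⟨a1, a2⟩ ⟨b1, b2⟩ ⟨l, h1, h2⟩
      dsimp only at h1 h2 ⊢
      refine ⟨l⁻¹, ?_, ?_⟩
      · rw [map_inv, h1, mul_assoc, mul_inv_cancel, mul_one]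
      · rw [h2]; simp [mul_assoc]
    · rintro ⟨a1, a2⟩ ⟨b1, b2⟩ ⟨c1, c2⟩ ⟨l, h1, h2⟩ ⟨m, h3, h4⟩
      dsimp only at h1 h2 h3 h4 ⊢
      refine ⟨l * m, ?_, ?_⟩
      · rw [map_mul, h3, h1, mul_assoc]
      · rw [h4, h2]
        simp only [Subgroup.coe_mul, mul_inv_rev, mul_assoc]

/-- The biset `[L,ψ] = H ×_{(L,ψ)} G`: the quotient of `H × G` by the relation
`(x·ψ(l), y) ∼ (x, l·y)` for `l ∈ L`. -/
def stdBiset (L : Subgroup G) (ψ : L →* H) : Type _ := Quotient (pairSetoid L ψ)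

/-- The `(G,H)`-biset structure on `[L,ψ]`: `h·[x,y]·g = [h·x, y·g]`. -/
def stdBisetAction (L : Subgroup G) (ψ : L →* H) : BisetAction G H (stdBiset L ψ) where
  smul h := Quotient.map (fun a => (h * a.1, a.2)) (by
    rintro ⟨a1, a2⟩ ⟨b1, b2⟩ ⟨l, h1, h2⟩
    dsimp only at h1 h2 ⊢
    exact ⟨l, by rw [h1, mul_assoc], h2⟩)
  rmul x g := Quotient.map (fun a => (a.1, a.2 * g)) (by
    rintro ⟨a1, a2⟩ ⟨b1, b2⟩ ⟨l, h1, h2⟩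
    dsimp only at h1 h2 ⊢
    exact ⟨l, h1, by rw [h2, mul_assoc]⟩) x
  one_smul x := by
    refine Quotient.inductionOn x (fun a => ?_)
    exact congrArg (Quotient.mk _) (by dsimp only; rw [one_mul])
  mul_smul h₁ h₂ x := by
    refine Quotient.inductionOn x (fun a => ?_)
    exact congrArg (Quotient.mk _) (by dsimp only; rw [mul_assoc])
  rmul_one x := by
    refine Quotient.inductionOn x (fun a => ?_)
    exact congrArg (Quotient.mk _) (by dsimp only; rw [mul_one])
  rmul_mul x g₁ g₂ := by
    refine Quotient.inductionOn x (fun a => ?_)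
    exact congrArg (Quotient.mk _) (by dsimp only; rw [mul_assoc])
  smul_rmul h x g := by
    refine Quotient.inductionOn x (fun a => ?_)
    rfl

end Std

/-! ### Tensor product (composition) of bisets -/

section Tensor

variable {G H K : Type*} [Group G] [Group H] [Group K] {X Y : Type*}

/-- The setoid on `Y × X` defining `Y ×_H X`, for `X` a `(G,H)`-biset and `Y` an
`(H,K)`-biset: `(y·h, x) ∼ (y, h·x)`. -/
def tensorSetoid (A : BisetAction G H X) (B : BisetAction H K Y) : Setoid (Y × X) where
  r a b := ∃ h : H, b.1 = B.rmul a.1 h ∧ b.2 = A.smul h⁻¹ a.2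
  iseqv := by
    refine ⟨fun a => ⟨1, by rw [B.rmul_one], by rw [inv_one, A.one_smul]⟩, ?_, ?_⟩
    · rintro ⟨y, x⟩ ⟨y', x'⟩ ⟨h, h1, h2⟩
      dsimp only at h1 h2 ⊢
      refine ⟨h⁻¹, ?_, ?_⟩
      · rw [h1, B.rmul_rmul, mul_inv_cancel, B.rmul_one]
      · rw [h2, A.smul_smul, inv_inv, mul_inv_cancel, A.one_smul]
    · rintro ⟨y, x⟩ ⟨y', x'⟩ ⟨y'', x''⟩ ⟨h, h1, h2⟩ ⟨h', h3, h4⟩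
      dsimp only at h1 h2 h3 h4 ⊢
      refine ⟨h * h', ?_, ?_⟩
      · rw [h3, h1, B.rmul_rmul]
      · rw [h4, h2, A.smul_smul, mul_inv_rev]

/-- The composite biset `Y ×_H X`, a `(G,K)`-biset. -/
def tensorBiset (A : BisetAction G H X) (B : BisetAction H K Y) : Type _ :=
  Quotient (tensorSetoid A B)

/-- The `(G,K)`-biset structure on `Y ×_H X`. -/
def tensorAction (A : BisetAction G H X) (B : BisetAction H K Y) :
    BisetAction G K (tensorBiset A B) where
  smul k := Quotient.map (fun a => (B.smul k a.1, a.2)) (by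
    rintro ⟨y, x⟩ ⟨y', x'⟩ ⟨h, h1, h2⟩
    dsimp only at h1 h2 ⊢
    exact ⟨h, by rw [h1, B.smul_rmul], h2⟩)
  rmul z g := Quotient.map (fun a => (a.1, A.rmul a.2 g)) (by
    rintro ⟨y, x⟩ ⟨y', x'⟩ ⟨h, h1, h2⟩
    dsimp only at h1 h2 ⊢
    exact ⟨h, h1, by rw [h2, A.smul_rmul]⟩) z
  one_smul z := by
    refine Quotient.inductionOn z (fun a => ?_)
    exact congrArg (Quotient.mk _) (by dsimp only; rw [B.one_smul])
  mul_smul k₁ k₂ z := by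
    refine Quotient.inductionOn z (fun a => ?_)
    exact congrArg (Quotient.mk _) (by dsimp only; rw [B.mul_smul])
  rmul_one z := by
    refine Quotient.inductionOn z (fun a => ?_)
    exact congrArg (Quotient.mk _) (by dsimp only; rw [A.rmul_one])
  rmul_mul z g₁ g₂ := by
    refine Quotient.inductionOn z (fun a => ?_)
    exact congrArg (Quotient.mk _) (by dsimp only; rw [A.rmul_mul])
  smul_rmul k z g := by
    refine Quotient.inductionOn z (fun a => ?_)
    rfl

end Tensor

/-! ### Products of bisets -/

section Prod

variable {G₁ G₂ H₁ H₂ S : Type*} [Group G₁] [Group G₂] [Group H₁] [Group H₂] [Group S]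
variable {X Y : Type*}

/-- The product of a `(G₁,H₁)`-biset and a `(G₂,H₂)`-biset, a
`(G₁ × G₂, H₁ × H₂)`-biset with coordinatewise actions. -/
def prodAction (A : BisetAction G₁ H₁ X) (B : BisetAction G₂ H₂ Y) :
    BisetAction (G₁ × G₂) (H₁ × H₂) (X × Y) where
  smul h z := (A.smul h.1 z.1, B.smul h.2 z.2)
  rmul z g := (A.rmul z.1 g.1, B.rmul z.2 g.2)
  one_smul z := by simp [A.one_smul, B.one_smul]
  mul_smul h₁ h₂ z := by simp [A.mul_smul, B.mul_smul]
  rmul_one z := by simp [A.rmul_one, B.rmul_one]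
  rmul_mul z g₁ g₂ := by simp [A.rmul_mul, B.rmul_mul]
  smul_rmul h z g := by simp [A.smul_rmul, B.smul_rmul]

/-- `X × Y` endowed with the `(S, H₁ × H₂)`-biset structure
`(b₁,b₂)·(x,y)·a = (b₁·x·a, b₂·y·a)` (the right `S`-action is diagonal). -/
def diagProdAction (A : BisetAction S H₁ X) (B : BisetAction S H₂ Y) :
    BisetAction S (H₁ × H₂) (X × Y) where
  smul h z := (A.smul h.1 z.1, B.smul h.2 z.2)
  rmul z a := (A.rmul z.1 a, B.rmul z.2 a)
  one_smul z := by simp [A.one_smul, B.one_smul]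
  mul_smul h₁ h₂ z := by simp [A.mul_smul, B.mul_smul]
  rmul_one z := by simp [A.rmul_one, B.rmul_one]
  rmul_mul z g₁ g₂ := by simp [A.rmul_mul, B.rmul_mul]
  smul_rmul h z g := by simp [A.smul_rmul, B.smul_rmul]

/-- `X × Y` endowed with the `(S, S × S)`-biset structure
`(b₁,b₂)·(x,y)·a = (b₁·x·b₂⁻¹, b₂·y·a)`, for `(S,S)`-bisets `X` and `Y`. -/
def twistProdAction (A : BisetAction S S X) (B : BisetAction S S Y) :
    BisetAction S (S × S) (X × Y) where
  smul b z := (A.rmul (A.smul b.1 z.1) b.2⁻¹, B.smul b.2 z.2)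
  rmul z a := (z.1, B.rmul z.2 a)
  one_smul z := by simp [A.one_smul, B.one_smul, A.rmul_one]
  mul_smul b c z := by
    simp only [Prod.fst_mul, Prod.snd_mul, Prod.mk.injEq, mul_inv_rev]
    refine ⟨?_, B.mul_smul _ _ _⟩
    rw [A.mul_smul, ← A.rmul_rmul, A.smul_rmul]
  rmul_one z := by simp [B.rmul_one]
  rmul_mul z g₁ g₂ := by simp [B.rmul_mul]
  smul_rmul h z g := by simp [B.smul_rmul]

end Prod
/-! ### Double quotient of an `(S,S)`-biset by a normal subgroup on both sides -/

section DoubleQuot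

variable {S : Type*} [Group S] {X : Type*}

/-- The setoid identifying `x` with `t₁·x·t₂` for `t₁, t₂ ∈ T`. -/
def doubleQuotSetoid (A : BisetAction S S X) (T : Subgroup S) : Setoid X where
  r x y := ∃ t₁ t₂ : T, y = A.smul t₁ (A.rmul x t₂)
  iseqv := by
    refine ⟨fun x => ⟨1, 1, by simp [A.one_smul, A.rmul_one]⟩, ?_, ?_⟩
    · rintro x y ⟨t₁, t₂, rfl⟩
      refine ⟨t₁⁻¹, t₂⁻¹, ?_⟩
      rw [A.smul_rmul, A.smul_smul, A.rmul_rmul]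
      simp [A.one_smul, A.rmul_one]
    · rintro x y z ⟨t₁, t₂, rfl⟩ ⟨s₁, s₂, rfl⟩
      refine ⟨s₁ * t₁, t₂ * s₂, ?_⟩
      rw [A.smul_rmul, A.smul_smul, A.rmul_rmul]
      norm_cast
  
/-- The double quotient `T\X/T`. -/
def doubleQuot (A : BisetAction S S X) (T : Subgroup S) : Type _ :=
  Quotient (doubleQuotSetoid A T)

/-- The induced `(S/T, S/T)`-biset structure on the double quotient `T\X/T`,
for `T` a normal subgroup of `S`: `s̄·[x]·t̄ = [s·x·t]`. -/
def doubleQuotAction (A : BisetAction S S X) (T : Subgroup S) [hT : T.Normal] :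
    BisetAction (S ⧸ T) (S ⧸ T) (doubleQuot A T) where
  smul sbar q := Quotient.liftOn₂' sbar q
    (fun s x => Quotient.mk (doubleQuotSetoid A T) (A.smul s x))
    (by
      intro s x s' x' hs hx
      obtain ⟨t₁, t₂, rfl⟩ := hx
      have hs' : s⁻¹ * s' ∈ T := QuotientGroup.leftRel_apply.mp hs
      refine Quotient.sound ⟨⟨s' * t₁ * s⁻¹, ?_⟩, t₂, ?_⟩
      · have h2 : s' * (t₁ : S) * s⁻¹ = s * ((s⁻¹ * s') * t₁) * s⁻¹ := by group
        rw [h2]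
        exact hT.conj_mem _ (mul_mem hs' t₁.2) s
      · simp only [A.smul_rmul, A.smul_smul]
        exact congrArg (fun e => A.smul e (A.rmul x (t₂ : S)))
          (show s' * (t₁ : S) = (s' * (t₁ : S) * s⁻¹) * s by group))
  rmul q tbar := Quotient.liftOn₂' q tbar
    (fun y s => Quotient.mk (doubleQuotSetoid A T) (A.rmul y s))
    (by
      intro y s y' s' hy hs
      obtain ⟨t₁, t₂, rfl⟩ := hy
      have hs' : s⁻¹ * s' ∈ T := QuotientGroup.leftRel_apply.mp hs
      refine Quotient.sound ⟨t₁, ⟨s⁻¹ * (t₂ : S) * s * (s⁻¹ * s'), ?_⟩, ?_⟩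
      · refine mul_mem ?_ hs'
        simpa using hT.conj_mem _ t₂.2 s⁻¹
      · simp only [A.smul_rmul, A.rmul_rmul]
        exact congrArg (fun e => A.smul (t₁ : S) (A.rmul y e))
          (show (t₂ : S) * s' = s * (s⁻¹ * (t₂ : S) * s * (s⁻¹ * s')) by group))
  one_smul q := by
    refine Quotient.inductionOn q (fun x => ?_)
    exact congrArg (Quotient.mk _) (A.one_smul x)
  mul_smul h₁ h₂ q := by
    refine Quotient.inductionOn₂' h₁ h₂ (fun s₁ s₂ => ?_)
    refine Quotient.inductionOn q (fun x => ?_)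
    exact congrArg (Quotient.mk _) (A.mul_smul s₁ s₂ x)
  rmul_one q := by
    refine Quotient.inductionOn q (fun x => ?_)
    exact congrArg (Quotient.mk _) (A.rmul_one x)
  rmul_mul q g₁ g₂ := by
    refine Quotient.inductionOn₂' g₁ g₂ (fun s₁ s₂ => ?_)
    refine Quotient.inductionOn q (fun x => ?_)
    exact congrArg (Quotient.mk _) (A.rmul_mul x s₁ s₂)
  smul_rmul h q g := by
    refine Quotient.inductionOn₂' h g (fun s₁ s₂ => ?_)
    refine Quotient.inductionOn q (fun x => ?_)
    exact congrArg (Quotient.mk _) (A.smul_rmul s₁ x s₂)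

end DoubleQuot

/-! The map `[a, b] ↦ [aT, bT]` from `S ×_{(P,φ)} S` to `S̄ ×_{(P̄,φ̄)} S̄` is well defined
because `φ̄` lifts `φ`, is surjective, and is equivariant along `S → S̄` on both sides, so it is
constant on `T × T`-orbits. Its fibres are exactly these orbits: if `[aT, bT] = [cT, dT]`, the
element of `P̄` relating the two pairs lifts to some `p ∈ P`, and after replacing `[a, b]` by
`[a φ(p), p⁻¹ b]` the two representatives agree modulo `T` in each coordinate. -/

section StdBisetMap

variable {G H G' H' : Type*} [Group G] [Group H] [Group G'] [Group H']

lemma stdBiset_mk_mul_eq (L : Subgroup G) (ψ : L →* H) (x : H) (l : L) (y : G) :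
    (⟦(x * ψ l, y)⟧ : stdBiset L ψ) = ⟦(x, l * y)⟧ :=
  Quotient.sound ⟨l⁻¹, by simp, by simp⟩

def stdBisetMap {L : Subgroup G} {ψ : L →* H} (α : H →* H') (β : G →* G')
    (ψ' : L.map β →* H') (hψ' : ∀ l : L, ψ' ⟨β l, Subgroup.mem_map_of_mem _ l.2⟩ = α (ψ l)) :
    stdBiset L ψ → stdBiset (L.map β) ψ' :=
  Quotient.map (Prod.map α β) <| by
    rintro a b ⟨l, h₁, h₂⟩
    exact ⟨⟨β l, Subgroup.mem_map_of_mem _ l.2⟩, by simp [h₁, hψ'], by simp [h₂]⟩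

variable {L : Subgroup G} {ψ : L →* H} (α : H →* H') (β : G →* G')
    (ψ' : L.map β →* H') (hψ' : ∀ l : L, ψ' ⟨β l, Subgroup.mem_map_of_mem _ l.2⟩ = α (ψ l))

lemma stdBisetMap_smul (h : H) (x : stdBiset L ψ) :
    stdBisetMap α β ψ' hψ' ((stdBisetAction L ψ).smul h x) =
      (stdBisetAction (L.map β) ψ').smul (α h) (stdBisetMap α β ψ' hψ' x) :=
  Quotient.inductionOn x fun a => congrArg (Quotient.mk _) (by simp)

lemma stdBisetMap_rmul (x : stdBiset L ψ) (g : G) :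
    stdBisetMap α β ψ' hψ' ((stdBisetAction L ψ).rmul x g) =
      (stdBisetAction (L.map β) ψ').rmul (stdBisetMap α β ψ' hψ' x) (β g) :=
  Quotient.inductionOn x fun a => congrArg (Quotient.mk _) (by simp)

lemma stdBisetMap_surjective (hα : Function.Surjective α) (hβ : Function.Surjective β) :
    Function.Surjective (stdBisetMap α β ψ' hψ') :=
  Quotient.map_surjective _ (hα.prodMap hβ)

end StdBisetMap

section DoubleQuotIso

variable {S : Type*} [Group S] {T : Subgroup S} [T.Normal]

noncomputable def doubleQuotIsoOfEquivariant {X Y : Type*} {A : BisetAction S S X}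
    {B : BisetAction (S ⧸ T) (S ⧸ T) Y} (f : X → Y) (hsurj : Function.Surjective f)
    (hsmul : ∀ s x, f (A.smul s x) = B.smul (s : S ⧸ T) (f x))
    (hrmul : ∀ x s, f (A.rmul x s) = B.rmul (f x) (s : S ⧸ T))
    (hfib : ∀ x y, f x = f y → doubleQuotSetoid A T x y) :
    BisetIso (doubleQuotAction A T) B := by
  have hinv : ∀ x y, doubleQuotSetoid A T x y → f x = f y := by
    rintro x y ⟨t₁, t₂, rfl⟩
    rw [hsmul, hrmul, (QuotientGroup.eq_one_iff _).mpr t₁.2,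
      (QuotientGroup.eq_one_iff _).mpr t₂.2, B.rmul_one, B.one_smul]
  let g : doubleQuot A T → Y := Quotient.lift f hinv
  have hbij : Function.Bijective g :=
    ⟨fun q q' => Quotient.inductionOn₂ q q' fun x y h => Quotient.sound (hfib x y h),
      fun y => (hsurj y).elim fun x hx => ⟨⟦x⟧, hx⟩⟩
  refine ⟨Equiv.ofBijective g hbij, fun s q => ?_, fun q s => ?_⟩
  · induction s using QuotientGroup.induction_on
    induction q using Quotient.inductionOn
    exact hsmul _ _
  · induction s using QuotientGroup.induction_on
    induction q using Quotient.inductionOn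
    exact hrmul _ _

variable {L : Subgroup S} {ψ : L →* S}

lemma doubleQuotSetoid_stdBiset_of_mk_eq {x y c d : S} (hc : (c : S ⧸ T) = x)
    (hd : (d : S ⧸ T) = y) :
    doubleQuotSetoid (stdBisetAction L ψ) T ⟦(x, y)⟧ ⟦(c, d)⟧ := by
  refine ⟨⟨c / x, QuotientGroup.eq_iff_div_mem.mp hc⟩,
    ⟨y⁻¹ * d, QuotientGroup.eq.mp hd.symm⟩, congrArg (Quotient.mk _) ?_⟩
  simp

variable {ψbar : L.map (QuotientGroup.mk' T) →* S ⧸ T}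
    {hψbar : ∀ l : L, ψbar ⟨QuotientGroup.mk' T l, Subgroup.mem_map_of_mem _ l.2⟩ =
      QuotientGroup.mk' T (ψ l)}

lemma doubleQuotSetoid_of_stdBisetMap_mk'_eq {x y : stdBiset L ψ}
    (h : stdBisetMap (QuotientGroup.mk' T) (QuotientGroup.mk' T) ψbar hψbar x =
      stdBisetMap (QuotientGroup.mk' T) (QuotientGroup.mk' T) ψbar hψbar y) :
    doubleQuotSetoid (stdBisetAction L ψ) T x y := by
  obtain ⟨⟨a₁, a₂⟩, rfl⟩ := Quotient.exists_rep x
  obtain ⟨⟨b₁, b₂⟩, rfl⟩ := Quotient.exists_rep y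
  obtain ⟨⟨_, l, hl, rfl⟩, h₁, h₂⟩ := Quotient.exact h
  have hshift : (⟦(a₁, a₂)⟧ : stdBiset L ψ) = ⟦(a₁ * ψ ⟨l, hl⟩, l⁻¹ * a₂)⟧ := by
    rw [stdBiset_mk_mul_eq, Subgroup.coe_mk, mul_inv_cancel_left]
  rw [hshift]
  refine doubleQuotSetoid_stdBiset_of_mk_eq ?_ ?_
  · have hψl := hψbar ⟨l, hl⟩
    simp only [QuotientGroup.mk'_apply] at hψl
    simpa [hψl] using h₁
  · simpa using h₂

end DoubleQuotIso

theorem doubleQuot_stdBiset_iso_general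
    (S : Type*) [Group S] (T : Subgroup S) [T.Normal]
    (P : Subgroup S) (φ : P →* S)
    (φbar : (P.map (QuotientGroup.mk' T)) →* S ⧸ T)
    (hφbar : ∀ u : P,
      φbar ⟨QuotientGroup.mk' T u, Subgroup.mem_map_of_mem (QuotientGroup.mk' T) u.2⟩ =
        QuotientGroup.mk' T (φ u)) :
    Nonempty (BisetIso (doubleQuotAction (stdBisetAction P φ) T)
      (stdBisetAction (P.map (QuotientGroup.mk' T)) φbar)) :=
  ⟨doubleQuotIsoOfEquivariant (stdBisetMap _ _ φbar hφbar)
    (stdBisetMap_surjective _ _ φbar hφbar (QuotientGroup.mk'_surjective T)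
      (QuotientGroup.mk'_surjective T))
    (stdBisetMap_smul _ _ φbar hφbar) (stdBisetMap_rmul _ _ φbar hφbar)
    fun _ _ => doubleQuotSetoid_of_stdBisetMap_mk'_eq⟩

/-- Let `S` be a finite group, `T ⊴ S`, and `(P,φ)` an `(S,S)`-pair with
`φ(P ∩ T) ≤ T`.  Let `φ̄ : P̄ →* S̄` (where `S̄ = S/T` and `P̄ = PT/T`) be the
homomorphism induced by `φ`, i.e. satisfying `φ̄(pT) = φ(p)T` for all `p ∈ P`.  Then the
double quotient `T\(S ×_{(P,φ)} S)/T`, with the induced left and right `S̄`-actions,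
is isomorphic as an `(S̄,S̄)`-biset to `S̄ ×_{(P̄,φ̄)} S̄`. -/
theorem doubleQuot_stdBiset_iso
    (S : Type*) [Group S] [Finite S] (T : Subgroup S) [T.Normal]
    (P : Subgroup S) (φ : P →* S) (hφT : ∀ u : P, (u : S) ∈ T → φ u ∈ T)
    (φbar : (P.map (QuotientGroup.mk' T)) →* S ⧸ T)
    (hφbar : ∀ u : P,
      φbar ⟨QuotientGroup.mk' T u, Subgroup.mem_map_of_mem (QuotientGroup.mk' T) u.2⟩ =
        QuotientGroup.mk' T (φ u)) :
    Nonempty (BisetIso (doubleQuotAction (stdBisetAction P φ) T)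
      (stdBisetAction (P.map (QuotientGroup.mk' T)) φbar)) :=
  doubleQuot_stdBiset_iso_general S T P φ φbar hφbar
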